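/- arXiv:2402.12584 — 2 statements merged into one kernel-verified Lean document; each statement's English description precedes it below -/
import Mathlib

section
/- In a balanced (n,k,r,c) assignment, for any fixed job a_i, the sum over all x-element subsets Ŝ of the servers of (max(n_{i,Ŝ} − 1, 0))² equals r(r−1)·C(c−2, x−2) − r·C(c−1, x−1) − C(c−r, x) + C(c, x). -/
/-- Binomial coefficient `C(a,b)` on integers, with the convention that it is
zero when `b < 0` or `b > a`. -/
def ch (a b : ℤ) : ℤ := if 0 ≤ b ∧ b ≤ a then ((a.toNat).choose b.toNat : ℤ) else 0
/-- A balanced `(n,k,r,c)` assignment: each of the `n` jobs is assigned to exactly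
`r` of the `c` servers, and each server is assigned exactly `k` jobs. -/
structure BalancedAssignment (n k r c : ℕ) where
  assign : Fin n → Finset (Fin c)
  job_deg : ∀ i : Fin n, (assign i).card = r
  server_deg : ∀ s : Fin c,
    (Finset.univ.filter (fun i : Fin n => s ∈ assign i)).card = k

/-! Write `m = #(A ∩ S)` for the servers `A` of the job. Then `(m - 1)₊² = (m² - m) - m + 1 - [m = 0]`,
and `m² - m` counts ordered pairs of distinct elements of `A ∩ S`. Summing over the `x`-subsets `S`
and double counting, each element of `A` lies in `C(c-1, x-1)` of them, each ordered pair of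
distinct elements in `C(c-2, x-2)`, and `C(c-r, x)` of them miss `A`. -/

open Finset

lemma ch_natCast (a b : ℕ) : ch a b = a.choose b := by
  unfold ch
  split_ifs with h
  · simp
  · rw [Nat.choose_eq_zero_of_lt (by omega), Nat.cast_zero]

lemma ch_of_neg (a : ℤ) {b : ℤ} (hb : b < 0) : ch a b = 0 := if_neg (by omega)

lemma cast_card_inter_sub_one_sq {α : Type*} [DecidableEq α] (A S : Finset α) :
    ((#(A ∩ S) - 1 : ℕ) : ℤ) ^ 2
      = #(A ∩ S).offDiag - #(A ∩ S) + 1 - if Disjoint A S then 1 else 0 := by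
  simp only [offDiag_card, Nat.cast_sub (Nat.le_mul_self _), disjoint_iff_inter_eq_empty,
    ← card_eq_zero]
  rcases #(A ∩ S) with _ | m
  · simp
  · push_cast
    ring

section
variable {α : Type*} [Fintype α] [DecidableEq α]

/-- The convention `ch a b = 0` outside `0 ≤ b ≤ a` makes this hold for every `x`. -/
lemma card_filter_powersetCard_univ_subset (T : Finset α) (x : ℕ) :
    (#{S ∈ powersetCard x univ | T ⊆ S} : ℤ) = ch (Fintype.card α - #T) (x - #T) := by
  by_cases hTx : #T ≤ x
  · rw [card_filter_powersetCard_subset T univ x (subset_univ T) hTx, card_univ,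
      ← Nat.cast_sub (card_le_univ T), ← Nat.cast_sub hTx, ch_natCast]
  · rw [ch_of_neg _ (by omega), Nat.cast_eq_zero, card_eq_zero, filter_eq_empty_iff]
    intro S hS hTS
    rw [mem_powersetCard_univ] at hS
    exact hTx (hS ▸ card_le_card hTS)

lemma sum_card_filter_subset_powersetCard_univ {ι : Type*} (U : Finset ι) (g : ι → Finset α)
    {t : ℕ} (hg : ∀ u ∈ U, #(g u) = t) (x : ℕ) :
    ∑ S ∈ powersetCard x univ, (#{u ∈ U | g u ⊆ S} : ℤ)
      = #U * ch (Fintype.card α - t) (x - t) :=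
  calc ∑ S ∈ powersetCard x univ, (#{u ∈ U | g u ⊆ S} : ℤ)
      = ∑ u ∈ U, (#{S ∈ powersetCard x univ | g u ⊆ S} : ℤ) := by
        exact_mod_cast sum_card_bipartiteAbove_eq_sum_card_bipartiteBelow (fun S u => g u ⊆ S)
    _ = ∑ _u ∈ U, ch (Fintype.card α - t) (x - t) :=
        sum_congr rfl fun u hu => by rw [card_filter_powersetCard_univ_subset, hg u hu]
    _ = _ := by rw [sum_const, nsmul_eq_mul]

lemma sum_card_inter_powersetCard_univ (A : Finset α) (x : ℕ) :
    ∑ S ∈ powersetCard x univ, (#(A ∩ S) : ℤ) = #A * ch (Fintype.card α - 1) (x - 1) := by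
  simp_rw [← filter_mem_eq_inter, ← singleton_subset_iff]
  exact_mod_cast sum_card_filter_subset_powersetCard_univ A (fun a => {a})
    (fun _ _ => card_singleton _) x

lemma sum_card_offDiag_inter_powersetCard_univ (A : Finset α) (x : ℕ) :
    ∑ S ∈ powersetCard x univ, (#(A ∩ S).offDiag : ℤ)
      = #A * (#A - 1) * ch (Fintype.card α - 2) (x - 2) := by
  have hpair (S : Finset α) : (A ∩ S).offDiag = {p ∈ A.offDiag | {p.1, p.2} ⊆ S} := by
    ext ⟨a, b⟩
    simp only [mem_offDiag, mem_inter, mem_filter, insert_subset_iff, singleton_subset_iff]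
    tauto
  simp_rw [hpair]
  rw [sum_card_filter_subset_powersetCard_univ A.offDiag (fun p => {p.1, p.2})
    (fun p hp => card_pair (mem_offDiag.1 hp).2.2) x, offDiag_card,
    Nat.cast_sub (Nat.le_mul_self _)]
  push_cast
  ring

lemma card_filter_powersetCard_univ_disjoint (A : Finset α) (x : ℕ) :
    #{S ∈ powersetCard x univ | Disjoint A S} = (Fintype.card α - #A).choose x := by
  rw [← card_compl, ← card_powersetCard]
  congr 1
  ext S
  simp [subset_compl_iff_disjoint_left, and_comm]

end

theorem sum_excess_sq_single_job_general (n k r c x : ℕ)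
    (D : BalancedAssignment n k r c) (i : Fin n) :
    ∑ S ∈ Finset.powersetCard x (Finset.univ : Finset (Fin c)),
        (((D.assign i ∩ S).card - 1 : ℕ) : ℤ) ^ 2
      = (r : ℤ) * ((r : ℤ) - 1) * ch ((c : ℤ) - 2) ((x : ℤ) - 2)
        - (r : ℤ) * ch ((c : ℤ) - 1) ((x : ℤ) - 1)
        - ch ((c : ℤ) - r) (x : ℤ) + ch (c : ℤ) (x : ℤ) := by
  have hr : #(D.assign i) = r := D.job_deg i
  have hrc : r ≤ c := hr ▸ (card_le_univ (D.assign i)).trans_eq (Fintype.card_fin c)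
  rw [sum_congr rfl fun S _ => cast_card_inter_sub_one_sq (D.assign i) S, sum_sub_distrib, sum_add_distrib, sum_sub_distrib, sum_boole,
    sum_card_offDiag_inter_powersetCard_univ, sum_card_inter_powersetCard_univ,
    card_filter_powersetCard_univ_disjoint, sum_const, card_powersetCard, card_univ,
    Fintype.card_fin, hr]
  rw [← Nat.cast_sub hrc, ch_natCast, ch_natCast]
  ring

/-- In a balanced `(n,k,r,c)` assignment, for any fixed job `i`, the sum over
all `x`-element subsets `Ŝ` of the servers of `(max(n_{i,Ŝ} - 1, 0))²` equals
`r(r-1)·C(c-2,x-2) - r·C(c-1,x-1) - C(c-r,x) + C(c,x)`. -/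
theorem sum_excess_sq_single_job (n k r c x : ℕ) (hx1 : 1 ≤ x) (hxc : x ≤ c)
    (D : BalancedAssignment n k r c) (i : Fin n) :
    ∑ S ∈ Finset.powersetCard x (Finset.univ : Finset (Fin c)),
        (((D.assign i ∩ S).card - 1 : ℕ) : ℤ) ^ 2
      = (r : ℤ) * ((r : ℤ) - 1) * ch ((c : ℤ) - 2) ((x : ℤ) - 2)
        - (r : ℤ) * ch ((c : ℤ) - 1) ((x : ℤ) - 1)
        - ch ((c : ℤ) - r) (x : ℤ) + ch (c : ℤ) (x : ℤ) :=
  sum_excess_sq_single_job_general n k r c x D i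
end

section
/- If a stretched compact balanced (n,k,r,c) assignment D exists, then for every x with 1 ≤ x ≤ c and every balanced (n,k,r,c) assignment D₁: ∑_{m=0}^{r} m^{D₁}(m)·g(m,x) ≤ ∑_{m=0}^{r} m^{D}(m)·g(m,x). Consequently D maximizes the variance of the number of distinct jobs received among all balanced (n,k,r,c) assignments. -/
/-- `pairCount D m` : the number of unordered pairs of distinct jobs that are
assigned together to exactly `m` common servers. -/
def pairCount {n k r c : ℕ} (D : BalancedAssignment n k r c) (m : ℕ) : ℕ :=
  (Finset.univ.filter (fun p : Fin n × Fin n =>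
    p.1 < p.2 ∧ (D.assign p.1 ∩ D.assign p.2).card = m)).card
/-- The number of distinct jobs assigned to some server in the subset `S`. -/
def numDistinct {n k r c : ℕ} (D : BalancedAssignment n k r c)
    (S : Finset (Fin c)) : ℕ :=
  (Finset.univ.filter (fun i : Fin n => (D.assign i ∩ S).Nonempty)).card
/-- `gval c r m x` : the value of `g(m,x)`, the sum over `x`-subsets of the
servers of `max(n_i - 1, 0) * max(n_j - 1, 0)` for a pair of jobs, each on `r`
of the `c` servers, sharing exactly `m` servers.  It is given by the closed
form `g(0,x)` together with the recursion for the difference `g(m+1,x)-g(m,x)`. -/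
def gval (c r m x : ℕ) : ℤ :=
  (r : ℤ) ^ 2 * ch ((c : ℤ) - 2) ((x : ℤ) - 2)
    - 2 * r * ch ((c : ℤ) - 1) ((x : ℤ) - 1)
    + ch (c : ℤ) (x : ℤ)
    - 2 * ch ((c : ℤ) - r) (x : ℤ)
    + 2 * r * ch ((c : ℤ) - r - 1) ((x : ℤ) - 1)
    + ch ((c : ℤ) - 2 * r) (x : ℤ)
  + ∑ j ∈ Finset.range m,
      (ch ((c : ℤ) - 2) ((x : ℤ) - 1) - 2 * ch ((c : ℤ) - r - 1) ((x : ℤ) - 1)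
        + ch ((c : ℤ) - 2 * r + j) ((x : ℤ) - 1))
/-- Mean of the number of distinct jobs received when a uniformly random
`x`-subset of the `c` servers communicates with the master. -/
noncomputable def meanDistinct {n k r c : ℕ} (D : BalancedAssignment n k r c)
    (x : ℕ) : ℚ :=
  (∑ S ∈ Finset.powersetCard x (Finset.univ : Finset (Fin c)),
    (numDistinct D S : ℚ)) / (c.choose x)

/-- Variance of the number of distinct jobs received when a uniformly random
`x`-subset of the `c` servers communicates with the master. -/
noncomputable def varDistinct {n k r c : ℕ} (D : BalancedAssignment n k r c)
    (x : ℕ) : ℚ :=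
  (∑ S ∈ Finset.powersetCard x (Finset.univ : Finset (Fin c)),
    ((numDistinct D S : ℚ) - meanDistinct D x) ^ 2) / (c.choose x)

open Finset

lemma ch_nonneg (a b : ℤ) : 0 ≤ ch a b := by
  unfold ch; split_ifs <;> positivity

lemma ch_mono_left {a a' : ℤ} (b : ℤ) (h : a ≤ a') : ch a b ≤ ch a' b := by
  by_cases hb : 0 ≤ b ∧ b ≤ a
  · lift a to ℕ using by omega
    lift a' to ℕ using by omega
    lift b to ℕ using hb.1
    rw [ch_natCast, ch_natCast]
    exact_mod_cast Nat.choose_le_choose b (by omega)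
  · rw [ch, if_neg hb]
    exact ch_nonneg a' b

lemma ch_succ_left (a : ℤ) {b : ℤ} (hb : 1 ≤ b) : ch (a + 1) b = ch a (b - 1) + ch a b := by
  obtain ⟨b, rfl⟩ : ∃ b' : ℕ, b = b' + 1 := ⟨(b - 1).toNat, by omega⟩
  rcases lt_or_ge a 0 with ha | ha
  · simp [ch, show ¬ (b : ℤ) + 1 ≤ a + 1 by omega, show ¬ (b : ℤ) ≤ a by omega,
      show ¬ (b : ℤ) + 1 ≤ a by omega]
  · lift a to ℕ using ha
    have h1 : ((a : ℤ) + 1) = ((a + 1 : ℕ) : ℤ) := by push_cast; ring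
    have h2 : ((b : ℤ) + 1) = ((b + 1 : ℕ) : ℤ) := by push_cast; ring
    rw [add_sub_cancel_right, h1, h2, ch_natCast, ch_natCast, ch_natCast]
    exact_mod_cast Nat.choose_succ_succ a b

-- For `x = 0` and `a < b` the left side is `1`, whereas `ch` vanishes at a negative top entry.
lemma natCast_choose_sub_eq_ch (a b : ℕ) {x : ℕ} (hx : 1 ≤ x) :
    ((a - b).choose x : ℤ) = ch ((a : ℤ) - b) x := by
  rcases le_total b a with h | h
  · rw [← Nat.cast_sub h, ch_natCast]
  · rw [Nat.sub_eq_zero_of_le h, Nat.choose_eq_zero_of_lt hx, ch, if_neg (by omega),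
      Nat.cast_zero]

lemma monotone_gval_succ_sub (c r x : ℕ) :
    Monotone fun m => gval c r (m + 1) x - gval c r m x := by
  have hstep : ∀ m, gval c r (m + 1) x - gval c r m x
      = ch ((c : ℤ) - 2) ((x : ℤ) - 1) - 2 * ch ((c : ℤ) - r - 1) ((x : ℤ) - 1)
        + ch ((c : ℤ) - 2 * r + m) ((x : ℤ) - 1) := fun m => by
    rw [gval, gval, sum_range_succ]; ring
  intro i j hij
  simp only [hstep]
  linarith [ch_mono_left ((x : ℤ) - 1) (show (c : ℤ) - 2 * r + i ≤ c - 2 * r + j by omega)]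

lemma monotone_ch_add_succ_sub (a : ℤ) {b : ℤ} (hb : 1 ≤ b) :
    Monotone fun m : ℕ => ch (a + (m + 1 : ℕ)) b - ch (a + m) b := by
  have hstep : ∀ m : ℕ, ch (a + (m + 1 : ℕ)) b - ch (a + m) b = ch (a + m) (b - 1) :=
    fun m => by
    rw [Nat.cast_succ, ← add_assoc, ch_succ_left _ hb]; ring
  intro i j hij
  simp only [hstep]
  exact ch_mono_left _ (by omega)

lemma mul_le_chord_of_monotone_sub {f : ℕ → ℤ} (hf : Monotone fun m => f (m + 1) - f m)
    {m r : ℕ} (hm : m ≤ r) : r * f m ≤ (r - m) * f 0 + m * f r := by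
  set d : ℕ → ℤ := fun j => f (j + 1) - f j
  have hsum : ∀ m, f m = f 0 + ∑ j ∈ range m, d j := fun m => by
    rw [sum_range_sub f m]; ring
  have hcheb : (r : ℤ) * ∑ j ∈ range m, d j ≤ m * ∑ j ∈ range r, d j := by
    have h := (Antitone.antivary (f := fun j : ℕ => if j < m then (1 : ℤ) else 0)
      (fun i j hij => by dsimp only; split_ifs <;> omega) hf).antivaryOn (range r)
      |>.card_mul_sum_le_sum_mul_sum
    have hrange : (range r).filter (· < m) = range m := by
      ext j; simp only [mem_filter, mem_range]; omega
    simpa [ite_mul, sum_ite, hrange] using h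
  rw [hsum m, hsum r]
  linarith

lemma sum_mul_chord_eq (r : ℕ) (u : ℕ → ℕ) (a b : ℤ) :
    ∑ m ∈ range (r + 1), (u m : ℤ) * ((r - m) * a + m * b)
      = (r * ∑ m ∈ range (r + 1), (u m : ℤ) - ∑ m ∈ range (r + 1), (m * u m : ℕ)) * a
        + (∑ m ∈ range (r + 1), (m * u m : ℕ)) * b := by
  push_cast
  simp only [mul_add, sum_add_distrib, mul_sum, sum_mul, ← sum_sub_distrib]
  congr 1 <;> refine sum_congr rfl fun m _ => by ring

lemma sum_mul_le_of_chord {r : ℕ} {f : ℕ → ℤ}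
    (hf : ∀ m ≤ r, r * f m ≤ (r - m) * f 0 + m * f r) {p q : ℕ → ℕ}
    (hsum : ∑ m ∈ range (r + 1), p m = ∑ m ∈ range (r + 1), q m)
    (hmoment : ∑ m ∈ range (r + 1), m * p m = ∑ m ∈ range (r + 1), m * q m)
    (hq : ∀ m, 0 < m → m < r → q m = 0) :
    ∑ m ∈ range (r + 1), (p m : ℤ) * f m ≤ ∑ m ∈ range (r + 1), (q m : ℤ) * f m := by
  rcases Nat.eq_zero_or_pos r with rfl | hr
  · simp_all
  have hp_le : (r : ℤ) * ∑ m ∈ range (r + 1), (p m : ℤ) * f m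
      ≤ ∑ m ∈ range (r + 1), (p m : ℤ) * ((r - m) * f 0 + m * f r) := by
    rw [mul_sum]
    refine sum_le_sum fun m hm => ?_
    rw [mul_left_comm]
    exact mul_le_mul_of_nonneg_left (hf m (by simpa [Nat.lt_succ_iff] using hm)) (by positivity)
  have hq_eq : (r : ℤ) * ∑ m ∈ range (r + 1), (q m : ℤ) * f m
      = ∑ m ∈ range (r + 1), (q m : ℤ) * ((r - m) * f 0 + m * f r) := by
    rw [mul_sum]
    refine sum_congr rfl fun m hm => ?_
    rcases Nat.eq_zero_or_pos m with rfl | hm0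
    · simp; ring
    rcases (Nat.lt_succ_iff.mp (mem_range.mp hm)).lt_or_eq with hmr | rfl
    · simp [hq m hm0 hmr]
    · ring
  have hcast : ∑ m ∈ range (r + 1), (p m : ℤ) = ∑ m ∈ range (r + 1), (q m : ℤ) := by
    exact_mod_cast hsum
  refine le_of_mul_le_mul_left ?_ (by exact_mod_cast hr : (0 : ℤ) < r)
  calc (r : ℤ) * ∑ m ∈ range (r + 1), (p m : ℤ) * f m
      ≤ ∑ m ∈ range (r + 1), (p m : ℤ) * ((r - m) * f 0 + m * f r) := hp_le
    _ = ∑ m ∈ range (r + 1), (q m : ℤ) * ((r - m) * f 0 + m * f r) := by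
      rw [sum_mul_chord_eq, sum_mul_chord_eq, hcast, hmoment]
    _ = r * ∑ m ∈ range (r + 1), (q m : ℤ) * f m := hq_eq.symm

section SubsetsMeeting

variable {α : Type*} [Fintype α] [DecidableEq α] (x : ℕ)

lemma card_filter_powersetCard_disjoint (A : Finset α) :
    #{S ∈ powersetCard x (univ : Finset α) | Disjoint A S}
      = (Fintype.card α - #A).choose x := by
  have h : {S ∈ powersetCard x (univ : Finset α) | Disjoint A S} = powersetCard x Aᶜ := by
    ext S
    simp only [mem_filter, mem_powersetCard, subset_univ, true_and, subset_compl_iff_disjoint_left]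
    tauto
  rw [h, card_powersetCard, card_compl]

lemma card_filter_powersetCard_inter_nonempty (A : Finset α) :
    #{S ∈ powersetCard x (univ : Finset α) | (A ∩ S).Nonempty}
        + (Fintype.card α - #A).choose x
      = (Fintype.card α).choose x := by
  rw [← card_filter_powersetCard_disjoint, ← card_univ, ← card_powersetCard]
  simp_rw [← not_disjoint_iff_nonempty_inter]
  rw [add_comm]
  exact card_filter_add_card_filter_not _

lemma card_filter_powersetCard_inter_nonempty_and (A B : Finset α) :
    (#{S ∈ powersetCard x (univ : Finset α) | (A ∩ S).Nonempty ∧ (B ∩ S).Nonempty} : ℤ)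
      = (Fintype.card α).choose x - (Fintype.card α - #A).choose x
        - (Fintype.card α - #B).choose x + (Fintype.card α - #(A ∪ B)).choose x := by
  set U := {S ∈ powersetCard x (univ : Finset α) | Disjoint A S}
  set V := {S ∈ powersetCard x (univ : Finset α) | Disjoint B S}
  have hmiss : {S ∈ powersetCard x (univ : Finset α) |
      ¬((A ∩ S).Nonempty ∧ (B ∩ S).Nonempty)} = U ∪ V := by
    simp_rw [U, V, ← filter_or, ← not_disjoint_iff_nonempty_inter, not_and_or, not_not]
  have hmiss_both : U ∩ V = {S ∈ powersetCard x (univ : Finset α) | Disjoint (A ∪ B) S} := by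
    simp_rw [U, V, ← filter_and, disjoint_union_left]
  have hsplit := card_filter_add_card_filter_not (s := powersetCard x (univ : Finset α))
    (fun S => (A ∩ S).Nonempty ∧ (B ∩ S).Nonempty)
  have hincl := card_union_add_card_inter U V
  rw [hmiss, card_powersetCard, card_univ] at hsplit
  rw [hmiss_both, card_filter_powersetCard_disjoint] at hincl
  have hU : #U = _ := card_filter_powersetCard_disjoint x A
  have hV : #V = _ := card_filter_powersetCard_disjoint x B
  omega

end SubsetsMeeting

lemma sq_eq_add_two_mul_choose_two (N : ℕ) : N ^ 2 = N + 2 * N.choose 2 := by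
  induction N with
  | zero => rfl
  | succ N ih =>
    rw [Nat.choose_succ_succ, Nat.choose_one_right]
    linarith [show (N + 1) ^ 2 = N ^ 2 + 2 * N + 1 by ring]

lemma sum_sub_sq_le_of_sum_eq {ι R : Type*} [CommRing R] [PartialOrder R] [IsOrderedRing R]
    {s : Finset ι} {f g : ι → R} (hsum : ∑ i ∈ s, f i = ∑ i ∈ s, g i)
    (hsq : ∑ i ∈ s, f i ^ 2 ≤ ∑ i ∈ s, g i ^ 2) (μ : R) :
    ∑ i ∈ s, (f i - μ) ^ 2 ≤ ∑ i ∈ s, (g i - μ) ^ 2 := by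
  have expand : ∀ h : ι → R,
      ∑ i ∈ s, (h i - μ) ^ 2
        = ∑ i ∈ s, h i ^ 2 - 2 * μ * ∑ i ∈ s, h i + #s • μ ^ 2 := by
    intro h
    simp only [sub_sq, sum_add_distrib, sum_sub_distrib, mul_sum, sum_const]
    exact congrArg₂ _ (congrArg₂ _ rfl (sum_congr rfl fun i _ => by ring)) rfl
  rw [expand, expand, hsum]
  gcongr

namespace BalancedAssignment

variable {n k r c : ℕ}

section

variable (D : BalancedAssignment n k r c) (x : ℕ)

lemma card_assign_inter_le (i j : Fin n) : #(D.assign i ∩ D.assign j) ≤ r :=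
  (card_le_card inter_subset_left).trans (D.job_deg i).le

lemma card_assign_union (i j : Fin n) :
    #(D.assign i ∪ D.assign j) = 2 * r - #(D.assign i ∩ D.assign j) := by
  have h := card_union_add_card_inter (D.assign i) (D.assign j)
  rw [D.job_deg, D.job_deg] at h
  omega

lemma sum_pairCount_smul {M : Type*} [AddCommMonoid M] (φ : ℕ → M) :
    ∑ m ∈ range (r + 1), pairCount D m • φ m
      = ∑ p : Fin n × Fin n with p.1 < p.2, φ #(D.assign p.1 ∩ D.assign p.2) := by
  rw [← sum_fiberwise_of_maps_to (g := fun p : Fin n × Fin n => #(D.assign p.1 ∩ D.assign p.2))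
    (t := range (r + 1)) fun p _ => mem_range.mpr (Nat.lt_succ_of_le (D.card_assign_inter_le _ _))]
  refine sum_congr rfl fun m _ => ?_
  rw [sum_congr rfl fun p hp => congrArg φ (mem_filter.mp hp).2, sum_const, pairCount,
    filter_filter]

lemma sum_pairCount : ∑ m ∈ range (r + 1), pairCount D m = n.choose 2 := by
  simpa only [smul_eq_mul, mul_one, ← card_eq_sum_ones, Fintype.card_product_filter_lt,
    Fintype.card_fin] using D.sum_pairCount_smul (fun _ => (1 : ℕ))

lemma sum_mul_pairCount : ∑ m ∈ range (r + 1), m * pairCount D m = c * k.choose 2 := by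
  have hpairs := D.sum_pairCount_smul id
  simp only [smul_eq_mul, id, mul_comm (pairCount D _)] at hpairs
  have hdouble := sum_card_bipartiteAbove_eq_sum_card_bipartiteBelow
    (s := ({p : Fin n × Fin n | p.1 < p.2} : Finset _)) (t := univ)
    (r := fun p s => s ∈ D.assign p.1 ∩ D.assign p.2)
  simp only [bipartiteAbove, bipartiteBelow, filter_univ_mem] at hdouble
  rw [hpairs, hdouble, sum_const_nat (m := k.choose 2) fun s _ => ?_, card_univ, Fintype.card_fin]
  rw [← card_product_filter_lt.trans (congrArg (Nat.choose · 2) (D.server_deg s))]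
  congr 1
  ext p
  simp only [mem_filter, mem_univ, true_and, mem_inter, mem_product]
  tauto

lemma card_filter_powersetCard_assign_inter_nonempty (i : Fin n) :
    #{S ∈ powersetCard x (univ : Finset (Fin c)) | (D.assign i ∩ S).Nonempty}
      = c.choose x - (c - r).choose x := by
  have h := card_filter_powersetCard_inter_nonempty x (D.assign i)
  rw [D.job_deg, Fintype.card_fin] at h
  omega

lemma sum_numDistinct :
    ∑ S ∈ powersetCard x (univ : Finset (Fin c)), numDistinct D S
      = n * (c.choose x - (c - r).choose x) := by
  have h := sum_card_bipartiteAbove_eq_sum_card_bipartiteBelow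
    (s := powersetCard x (univ : Finset (Fin c))) (t := univ)
    (r := fun S i => (D.assign i ∩ S).Nonempty)
  simp only [bipartiteAbove, bipartiteBelow] at h
  simp only [numDistinct]
  rw [h, sum_const_nat fun i _ => D.card_filter_powersetCard_assign_inter_nonempty x i,
    card_univ, Fintype.card_fin]

lemma sum_numDistinct_sq :
    ∑ S ∈ powersetCard x (univ : Finset (Fin c)), numDistinct D S ^ 2
      = ∑ S ∈ powersetCard x (univ : Finset (Fin c)), numDistinct D S
        + 2 * ∑ p : Fin n × Fin n with p.1 < p.2,
          #{S ∈ powersetCard x (univ : Finset (Fin c)) |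
            (D.assign p.1 ∩ S).Nonempty ∧ (D.assign p.2 ∩ S).Nonempty} := by
  have h := sum_card_bipartiteAbove_eq_sum_card_bipartiteBelow
    (s := powersetCard x (univ : Finset (Fin c)))
    (t := ({p : Fin n × Fin n | p.1 < p.2} : Finset _))
    (r := fun S p => (D.assign p.1 ∩ S).Nonempty ∧ (D.assign p.2 ∩ S).Nonempty)
  simp only [bipartiteAbove, bipartiteBelow] at h
  rw [← h, mul_sum, ← sum_add_distrib]
  refine sum_congr rfl fun S _ => ?_
  rw [sq_eq_add_two_mul_choose_two, numDistinct, ← card_product_filter_lt]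
  congr 3
  ext p
  simp only [mem_filter, mem_univ, true_and, mem_product]
  tauto

lemma sum_card_filter_powersetCard_assign_inter_nonempty_and :
    ∑ p : Fin n × Fin n with p.1 < p.2,
        (#{S ∈ powersetCard x (univ : Finset (Fin c)) |
          (D.assign p.1 ∩ S).Nonempty ∧ (D.assign p.2 ∩ S).Nonempty} : ℤ)
      = n.choose 2 * (c.choose x - 2 * (c - r).choose x)
        + ∑ m ∈ range (r + 1), (pairCount D m : ℤ) * (c - (2 * r - m)).choose x := by
  simp only [card_filter_powersetCard_inter_nonempty_and, D.job_deg, D.card_assign_union,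
    Fintype.card_fin]
  have hweight := D.sum_pairCount_smul fun m => ((c - (2 * r - m)).choose x : ℤ)
  simp only [nsmul_eq_mul] at hweight
  rw [sum_add_distrib, ← hweight, sum_const, Fintype.card_product_filter_lt, Fintype.card_fin,
    nsmul_eq_mul]
  ring

end

variable {D₁ D : BalancedAssignment n k r c} {x : ℕ}

lemma sum_numDistinct_sq_le
    (h : ∑ m ∈ range (r + 1), (pairCount D₁ m : ℤ) * (c - (2 * r - m)).choose x
      ≤ ∑ m ∈ range (r + 1), (pairCount D m : ℤ) * (c - (2 * r - m)).choose x) :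
    ∑ S ∈ powersetCard x (univ : Finset (Fin c)), numDistinct D₁ S ^ 2
      ≤ ∑ S ∈ powersetCard x (univ : Finset (Fin c)), numDistinct D S ^ 2 := by
  rw [sum_numDistinct_sq, sum_numDistinct_sq, D₁.sum_numDistinct, D.sum_numDistinct]
  zify
  rw [sum_card_filter_powersetCard_assign_inter_nonempty_and,
    sum_card_filter_powersetCard_assign_inter_nonempty_and]
  linarith

lemma varDistinct_le_of_sum_sq_le
    (h : ∑ S ∈ powersetCard x (univ : Finset (Fin c)), numDistinct D₁ S ^ 2
      ≤ ∑ S ∈ powersetCard x (univ : Finset (Fin c)), numDistinct D S ^ 2) :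
    varDistinct D₁ x ≤ varDistinct D x := by
  have hsum : ∑ S ∈ powersetCard x (univ : Finset (Fin c)), (numDistinct D₁ S : ℚ)
      = ∑ S ∈ powersetCard x (univ : Finset (Fin c)), (numDistinct D S : ℚ) := by
    exact_mod_cast (D₁.sum_numDistinct x).trans (D.sum_numDistinct x).symm
  have hmean : meanDistinct D₁ x = meanDistinct D x := by
    rw [meanDistinct, meanDistinct, hsum]
  rw [varDistinct, varDistinct, hmean]
  exact div_le_div_of_nonneg_right (sum_sub_sq_le_of_sum_eq hsum (by exact_mod_cast h) _)
    (Nat.cast_nonneg _)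

end BalancedAssignment

theorem stretched_compact_max_variance_general (n k r c : ℕ)
    (D D₁ : BalancedAssignment n k r c)
    (hstretch : ∀ m, 0 < m → m < r → pairCount D m = 0)
    (x : ℕ) (hx1 : 1 ≤ x) :
    (∑ m ∈ Finset.range (r + 1), (pairCount D₁ m : ℤ) * gval c r m x
        ≤ ∑ m ∈ Finset.range (r + 1), (pairCount D m : ℤ) * gval c r m x)
      ∧ varDistinct D₁ x ≤ varDistinct D x := by
  have hconvex : ∀ f : ℕ → ℤ, Monotone (fun m => f (m + 1) - f m) →
      ∑ m ∈ range (r + 1), (pairCount D₁ m : ℤ) * f m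
        ≤ ∑ m ∈ range (r + 1), (pairCount D m : ℤ) * f m := fun f hf =>
    sum_mul_le_of_chord (fun _ hm => mul_le_chord_of_monotone_sub hf hm)
      (D₁.sum_pairCount.trans D.sum_pairCount.symm)
      (D₁.sum_mul_pairCount.trans D.sum_mul_pairCount.symm) hstretch
  refine ⟨hconvex _ (monotone_gval_succ_sub c r x), ?_⟩
  refine BalancedAssignment.varDistinct_le_of_sum_sq_le
    (BalancedAssignment.sum_numDistinct_sq_le ?_)
  have hweights : ∀ E : BalancedAssignment n k r c,
      ∑ m ∈ range (r + 1), (pairCount E m : ℤ) * (c - (2 * r - m)).choose x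
        = ∑ m ∈ range (r + 1), (pairCount E m : ℤ) * ch (c - 2 * r + m) x :=
    fun E => sum_congr rfl fun m hm => by
      rw [natCast_choose_sub_eq_ch _ _ hx1]
      have := mem_range.mp hm
      congr 2
      omega
  rw [hweights, hweights]
  exact hconvex _ (monotone_ch_add_succ_sub _ (by exact_mod_cast hx1))

/-- If a stretched compact balanced `(n,k,r,c)` assignment `D` exists, then for
every `1 ≤ x ≤ c` and every balanced `(n,k,r,c)` assignment `D₁`,
`∑_m m^{D₁}(m)·g(m,x) ≤ ∑_m m^{D}(m)·g(m,x)`; consequently `D` maximizes the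
variance of the number of distinct jobs received. -/
theorem stretched_compact_max_variance (n k r c : ℕ)
    (D D₁ : BalancedAssignment n k r c)
    (hstretch : ∀ m, 0 < m → m < r → pairCount D m = 0)
    (x : ℕ) (hx1 : 1 ≤ x) (hxc : x ≤ c) :
    (∑ m ∈ Finset.range (r + 1), (pairCount D₁ m : ℤ) * gval c r m x
        ≤ ∑ m ∈ Finset.range (r + 1), (pairCount D m : ℤ) * gval c r m x)
      ∧ varDistinct D₁ x ≤ varDistinct D x :=
  stretched_compact_max_variance_general n k r c D D₁ hstretch x hx1
end
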